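/- For a symmetric matrix M ∈ ℝ^{n×n} with eigenvalues |λ₁| ≥ … ≥ |λₙ| and X ∈ ℝ^{n×k} with orthonormal columns, the squared cosine between M and H(X), defined as cos(M,H(X))² = ‖P‖_F²/‖M‖_F² where P is the Frobenius-orthogonal projection of M onto H(X), satisfies cos(M,H(X))² ≤ (∑_{i=1}^k λᵢ²)/(∑_{i=1}^n λᵢ²), with equality attained when the columns of X are eigenvectors for λ₁,…,λ_k. -/

import Mathlib

open Matrix Finset

/-!
Put `Y = Uᵀ X`, again a matrix with orthonormal columns. Conjugation `A ↦ X A Xᵀ` by such a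
matrix preserves the Frobenius norm, so `‖M‖² = ∑ λⱼ²` and, since `P = X diag(α) Xᵀ`,
`‖P‖² = ∑ αᵢ²` with `αᵢ = xᵢᵀ M xᵢ = ∑ⱼ λⱼ Yⱼᵢ²`. Cauchy–Schwarz over the unit columns of `Y`
gives `αᵢ² ≤ ∑ⱼ λⱼ² Yⱼᵢ²`, hence `‖P‖² ≤ ∑ⱼ dⱼ λⱼ²` with row weights `dⱼ = ∑ᵢ Yⱼᵢ²`. These lie
in `[0, 1]` (`Y Yᵀ` is an orthogonal projection) and add up to `k`, and any such weighting of the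
nonincreasing sequence `λⱼ²` is at most the sum of its first `k` terms. When `X` consists of the
leading eigenvectors, `Y` is the first `k` columns of the identity and `αᵢ = λᵢ`.
-/

section Orthonormal

variable {m ι : Type*} [Fintype m]

theorem sum_sum_sq_eq_trace_mul_transpose [Fintype ι] (A : Matrix m ι ℝ) :
    ∑ r, ∑ c, A r c ^ 2 = trace (A * Aᵀ) := by
  simp [trace, mul_apply, sq]

theorem sum_sum_sq_mul_diagonal_mul_transpose [Fintype ι] [DecidableEq ι] {X : Matrix m ι ℝ}
    (hX : Xᵀ * X = 1) (a : ι → ℝ) :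
    ∑ r, ∑ c, (X * diagonal a * Xᵀ) r c ^ 2 = ∑ i, a i ^ 2 := by
  have hsq : X * diagonal a * Xᵀ * (X * diagonal a * Xᵀ)ᵀ =
      X * (diagonal a * diagonal a * Xᵀ) := by
    simp only [transpose_mul, transpose_transpose, diagonal_transpose, Matrix.mul_assoc]
    rw [← Matrix.mul_assoc Xᵀ X, hX, Matrix.one_mul]
  rw [sum_sum_sq_eq_trace_mul_transpose, hsq, trace_mul_comm, Matrix.mul_assoc, hX,
    Matrix.mul_one, diagonal_mul_diagonal, trace_diagonal]
  simp only [sq]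

theorem sum_sq_col_eq_one [DecidableEq ι] {Y : Matrix m ι ℝ} (hY : Yᵀ * Y = 1) (i : ι) :
    ∑ j, Y j i ^ 2 = 1 := by
  simpa [mul_apply, sq] using congrFun (congrFun hY i) i

theorem sum_sq_row_le_one [Fintype ι] [DecidableEq ι] {Y : Matrix m ι ℝ} (hY : Yᵀ * Y = 1)
    (j : m) :
    ∑ i, Y j i ^ 2 ≤ 1 := by
  set Q := Y * Yᵀ
  have hQ : Q * Qᵀ = Q := by
    simp only [Q, transpose_mul, transpose_transpose, Matrix.mul_assoc]
    rw [← Matrix.mul_assoc Yᵀ Y, hY, Matrix.one_mul]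
  have hd : Q j j = ∑ i, Y j i ^ 2 := by simp [Q, mul_apply, sq]
  -- `Q` is an orthogonal projection, so `Q j j = ∑ l, Q j l ^ 2 ≥ Q j j ^ 2`.
  have hle : Q j j ^ 2 ≤ Q j j := by
    calc Q j j ^ 2 ≤ ∑ l, Q j l ^ 2 := single_le_sum (fun l _ => sq_nonneg (Q j l)) (mem_univ j)
      _ = Q j j := by rw [← congrFun (congrFun hQ j) j]; simp [mul_apply, sq]
  have h0 : 0 ≤ Q j j := hd ▸ sum_nonneg fun i _ => sq_nonneg _
  rw [← hd]
  nlinarith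

theorem sum_sum_sq_eq_card [Fintype ι] [DecidableEq ι] {Y : Matrix m ι ℝ} (hY : Yᵀ * Y = 1) :
    ∑ j, ∑ i, Y j i ^ 2 = Fintype.card ι := by
  rw [sum_comm]
  simp [sum_sq_col_eq_one hY]

end Orthonormal

theorem sum_smul_vecMulVec_col {m ι R : Type*} [Fintype ι] [DecidableEq ι] [CommSemiring R]
    (X : Matrix m ι R) (a : ι → R) :
    ∑ i, a i • vecMulVec (fun r => X r i) (fun r => X r i) = X * diagonal a * Xᵀ := by
  ext r c
  rw [mul_apply]
  simp only [Matrix.sum_apply, Matrix.smul_apply, vecMulVec_apply, smul_eq_mul, mul_diagonal,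
    transpose_apply]
  exact sum_congr rfl fun i _ => by ring

theorem dotProduct_mul_diagonal_mul_transpose_mulVec {m n : Type*} [Fintype m] [Fintype n]
    [DecidableEq n] (U : Matrix m n ℝ) (lam : n → ℝ) (x : m → ℝ) :
    x ⬝ᵥ ((U * diagonal lam * Uᵀ) *ᵥ x) = ∑ j, lam j * (Uᵀ *ᵥ x) j ^ 2 := by
  rw [← mulVec_mulVec, ← mulVec_mulVec, dotProduct_mulVec, ← mulVec_transpose, dotProduct]
  simp only [mulVec_diagonal]
  exact sum_congr rfl fun j _ => by ring

theorem sq_sum_mul_sq_le {n : Type*} [Fintype n] {y : n → ℝ} (hy : ∑ j, y j ^ 2 = 1)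
    (lam : n → ℝ) : (∑ j, lam j * y j ^ 2) ^ 2 ≤ ∑ j, lam j ^ 2 * y j ^ 2 := by
  have h := sum_mul_sq_le_sq_mul_sq univ y (fun j => lam j * y j)
  rw [hy, one_mul] at h
  calc (∑ j, lam j * y j ^ 2) ^ 2 = (∑ j, y j * (lam j * y j)) ^ 2 := by
        congr 1; exact sum_congr rfl fun j _ => by ring
    _ ≤ ∑ j, (lam j * y j) ^ 2 := h
    _ = ∑ j, lam j ^ 2 * y j ^ 2 := sum_congr rfl fun j _ => by ring

theorem sum_mul_le_sum_of_threshold {ι : Type*} [Fintype ι] {S : Finset ι}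
    {a d : ι → ℝ} (t : ℝ) (hS : ∀ j ∈ S, t ≤ a j) (hSc : ∀ j ∉ S, a j ≤ t)
    (hd0 : ∀ j, 0 ≤ d j) (hd1 : ∀ j, d j ≤ 1) (hd : ∑ j, d j = S.card) :
    ∑ j, d j * a j ≤ ∑ j ∈ S, a j := by
  classical
  have hpoint : ∀ j, d j * a j ≤
      (if j ∈ S then a j else 0) + t * (d j - if j ∈ S then 1 else 0) := by
    intro j
    split_ifs with hj
    · nlinarith [hS j hj, hd1 j]
    · nlinarith [hSc j hj, hd0 j]
  calc ∑ j, d j * a j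
        ≤ ∑ j, ((if j ∈ S then a j else 0) + t * (d j - if j ∈ S then 1 else 0)) :=
        sum_le_sum fun j _ => hpoint j
    _ = ∑ j ∈ S, a j + t * (∑ j, d j - S.card) := by
        simp [sum_add_distrib, ← mul_sum, sum_sub_distrib, sum_ite_mem]
    _ = ∑ j ∈ S, a j := by rw [hd, sub_self, mul_zero, add_zero]

theorem sum_mul_le_sum_castLE {n k : ℕ} (hk : k ≤ n) {a d : Fin n → ℝ} (ha : Antitone a)
    (ha0 : ∀ j, 0 ≤ a j) (hd0 : ∀ j, 0 ≤ d j) (hd1 : ∀ j, d j ≤ 1) (hd : ∑ j, d j = k) :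
    ∑ j, d j * a j ≤ ∑ j : Fin k, a (Fin.castLE hk j) := by
  classical
  set S := univ.map (Fin.castLEEmb hk)
  have hmem : ∀ j, j ∈ S ↔ (j : ℕ) < k := fun j =>
    ⟨fun h => by obtain ⟨i, -, rfl⟩ := mem_map.mp h; exact i.isLt,
     fun h => mem_map.mpr ⟨⟨j, h⟩, mem_univ _, rfl⟩⟩
  have key := sum_mul_le_sum_of_threshold (S := S) (a := a) (d := d)
    (if h : k < n then a ⟨k, h⟩ else 0) ?_ ?_ hd0 hd1 (by simpa [S] using hd)
  · simpa [S] using key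
  · intro j hj
    split_ifs with h
    · exact ha (Fin.le_def.mpr ((hmem j).mp hj).le)
    · exact ha0 j
  · intro j hj
    have hkj : k ≤ j := not_lt.mp ((hmem j).not.mp hj)
    rw [dif_pos (hkj.trans_lt j.isLt)]
    exact ha (Fin.le_def.mpr hkj)

theorem sum_sq_sum_mul_sq_le_sum_castLE {n k : ℕ} (hk : k ≤ n) {Y : Matrix (Fin n) (Fin k) ℝ}
    (hY : Yᵀ * Y = 1) {lam : Fin n → ℝ} (hlam : Antitone fun j => lam j ^ 2) :
    ∑ i, (∑ j, lam j * Y j i ^ 2) ^ 2 ≤ ∑ j : Fin k, lam (Fin.castLE hk j) ^ 2 :=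
  calc ∑ i, (∑ j, lam j * Y j i ^ 2) ^ 2 ≤ ∑ i, ∑ j, lam j ^ 2 * Y j i ^ 2 :=
        sum_le_sum fun i _ => sq_sum_mul_sq_le (sum_sq_col_eq_one hY i) lam
    _ = ∑ j, (∑ i, Y j i ^ 2) * lam j ^ 2 := by
        rw [sum_comm]
        exact sum_congr rfl fun j _ => by
          rw [sum_mul]; exact sum_congr rfl fun i _ => mul_comm _ _
    _ ≤ ∑ j : Fin k, lam (Fin.castLE hk j) ^ 2 :=
        sum_mul_le_sum_castLE hk hlam (fun j => sq_nonneg _)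
          (fun j => sum_nonneg fun i _ => sq_nonneg _) (sum_sq_row_le_one hY)
          (by simpa using sum_sum_sq_eq_card hY)

theorem cos_H_upper_bound_general
    (n k : ℕ) (hk : k ≤ n)
    (U : Matrix (Fin n) (Fin n) ℝ) (hU : Uᵀ * U = 1)
    (lam : Fin n → ℝ)
    (hmono : ∀ i j : Fin n, i ≤ j → |lam j| ≤ |lam i|)
    (M : Matrix (Fin n) (Fin n) ℝ)
    (hM : M = U * Matrix.diagonal lam * Uᵀ)
    (X : Matrix (Fin n) (Fin k) ℝ) (hX : Xᵀ * X = 1)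
    (P : Matrix (Fin n) (Fin n) ℝ)
    (hP : P = ∑ i : Fin k,
      ((fun r => X r i) ⬝ᵥ (M *ᵥ fun r => X r i)) •
        vecMulVec (fun r => X r i) (fun r => X r i)) :
    (∑ r, ∑ c, (P r c) ^ 2) / (∑ r, ∑ c, (M r c) ^ 2) ≤
      (∑ j : Fin k, (lam (Fin.castLE hk j)) ^ 2) / (∑ i, (lam i) ^ 2) ∧
    ((∀ (i : Fin n) (j : Fin k), X i j = U i (Fin.castLE hk j)) →
      (∑ r, ∑ c, (P r c) ^ 2) / (∑ r, ∑ c, (M r c) ^ 2) =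
        (∑ j : Fin k, (lam (Fin.castLE hk j)) ^ 2) / (∑ i, (lam i) ^ 2)) := by
  set Y : Matrix (Fin n) (Fin k) ℝ := Uᵀ * X
  have hY : Yᵀ * Y = 1 := by
    rw [transpose_mul, transpose_transpose, Matrix.mul_assoc, ← Matrix.mul_assoc U,
      mul_eq_one_comm.mp hU, Matrix.one_mul, hX]
  have hα : ∀ i, (fun r => X r i) ⬝ᵥ (M *ᵥ fun r => X r i) = ∑ j, lam j * Y j i ^ 2 :=
      fun i => by
    rw [hM, dotProduct_mul_diagonal_mul_transpose_mulVec]; rfl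
  rw [hP, sum_smul_vecMulVec_col, sum_sum_sq_mul_diagonal_mul_transpose hX]
  simp only [hα]
  rw [hM, sum_sum_sq_mul_diagonal_mul_transpose hU]
  refine ⟨div_le_div_of_nonneg_right ?_ (by positivity), fun hXU => ?_⟩
  · exact sum_sq_sum_mul_sq_le_sum_castLE hk hY fun i j hij => sq_le_sq.mpr (hmono i j hij)
  · have hYU : ∀ j i, Y j i = (1 : Matrix (Fin n) (Fin n) ℝ) j (Fin.castLE hk i) := by
      intro j i
      rw [← hU]
      simp only [Y, mul_apply, hXU]
    simp [hYU, one_apply]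

/-- `cos(M, H(X))² ≤ (∑_{i≤k} λᵢ²)/(∑ᵢ λᵢ²)`, with equality when the columns of `X`
are eigenvectors for the `k` leading eigenvalues. -/
theorem cos_H_upper_bound
    (n k : ℕ) (hk : k ≤ n)
    (U : Matrix (Fin n) (Fin n) ℝ) (hU : Uᵀ * U = 1)
    (lam : Fin n → ℝ)
    (hmono : ∀ i j : Fin n, i ≤ j → |lam j| ≤ |lam i|)
    (M : Matrix (Fin n) (Fin n) ℝ)
    (hM : M = U * Matrix.diagonal lam * Uᵀ) (hM0 : M ≠ 0)
    (X : Matrix (Fin n) (Fin k) ℝ) (hX : Xᵀ * X = 1)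
    (P : Matrix (Fin n) (Fin n) ℝ)
    (hP : P = ∑ i : Fin k,
      ((fun r => X r i) ⬝ᵥ (M *ᵥ fun r => X r i)) •
        vecMulVec (fun r => X r i) (fun r => X r i)) :
    (∑ r, ∑ c, (P r c) ^ 2) / (∑ r, ∑ c, (M r c) ^ 2) ≤
      (∑ j : Fin k, (lam (Fin.castLE hk j)) ^ 2) / (∑ i, (lam i) ^ 2) ∧
    ((∀ (i : Fin n) (j : Fin k), X i j = U i (Fin.castLE hk j)) →
      (∑ r, ∑ c, (P r c) ^ 2) / (∑ r, ∑ c, (M r c) ^ 2) =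
        (∑ j : Fin k, (lam (Fin.castLE hk j)) ^ 2) / (∑ i, (lam i) ^ 2)) :=
  cos_H_upper_bound_general n k hk U hU lam hmono M hM X hX P hP
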